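/- arXiv:2311.12501 — 3 statements merged into one kernel-verified Lean document; each statement's English description precedes it below -/
import Mathlib

section
/- Let h ≥ 2, ε > 0, and suppose a multiset of h nonnegative reals summing to n is modified by repeatedly moving an amount m with εn/(2(h−1)) < m ≤ δ from the maximum element to the minimum element, where δ = min(x_max − n/h, n/h − x_min). Then each move strictly decreases the total excess E = Σ_{i : x_i > n/h}(x_i − n/h) by at least εn/(2(h−1)), and since E ≤ n initially, the process reaches a state with max deviation ≤ εn within at most 2(h−1)/ε moves. -/
/-- Repeatedly moving an amount m with εn/(2(h−1)) < m ≤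
min(x_max − n/h, n/h − x_min) from the maximum element to the minimum element
of h nonnegative reals summing to n strictly decreases the total excess
E = Σ_{i : x_i > n/h}(x_i − n/h) = Σ_i max(x_i − n/h, 0) by at least
εn/(2(h−1)) per move; since E ≤ n initially the number of moves is at most
2(h−1)/ε. -/
theorem rebalance_progress (h : ℕ) (hh : 2 ≤ h) (n ε : ℝ) (hn : 0 < n)
    (hε : 0 < ε) (x : ℕ → Fin h → ℝ) (T : ℕ)
    (hnonneg : ∀ t i, 0 ≤ x t i) (hsum0 : ∑ i, x 0 i = n)
    (hmove : ∀ t < T, ∃ imax imin : Fin h, imax ≠ imin ∧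
      (∀ i, x t i ≤ x t imax) ∧ (∀ i, x t imin ≤ x t i) ∧
      ∃ m : ℝ, ε * n / (2 * ((h : ℝ) - 1)) < m ∧
        m ≤ min (x t imax - n / h) (n / h - x t imin) ∧
        x (t + 1) =
          Function.update (Function.update (x t) imax (x t imax - m)) imin
            (x t imin + m)) :
    (∀ t < T, (∑ i, max (x (t + 1) i - n / h) 0)
        ≤ (∑ i, max (x t i - n / h) 0) - ε * n / (2 * ((h : ℝ) - 1)))
    ∧ (T : ℝ) ≤ 2 * ((h : ℝ) - 1) / ε := by
  have hhR : (2 : ℝ) ≤ (h : ℝ) := by exact_mod_cast hh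
  have hden : (0 : ℝ) < 2 * ((h : ℝ) - 1) := by linarith
  set c : ℝ := ε * n / (2 * ((h : ℝ) - 1)) with hc
  have hcpos : 0 < c := by
    apply div_pos (by positivity) hden
  have hnh : 0 ≤ n / h := by positivity
  -- step lemma
  have step : ∀ t < T, (∑ i, max (x (t + 1) i - n / h) 0)
      ≤ (∑ i, max (x t i - n / h) 0) - c := by
    intro t ht
    obtain ⟨imax, imin, hne, hmax, hmin, m, hmc, hmle, hupd⟩ := hmove t ht
    have hm1 : m ≤ x t imax - n / h := le_trans hmle (min_le_left _ _)
    have hm2 : m ≤ n / h - x t imin := le_trans hmle (min_le_right _ _)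
    have hmpos : 0 < m := lt_of_lt_of_le hcpos (le_of_lt hmc)
    have key : ∀ i, max (x t i - n / h) 0 - max (x (t + 1) i - n / h) 0
        = if i = imax then m else 0 := by
      intro i
      by_cases hi1 : i = imin
      · subst hi1
        simp only [hupd, Function.update_self, if_neg (Ne.symm hne)]
        rw [max_eq_right (by linarith), max_eq_right (by linarith)]
        ring
      · by_cases hi2 : i = imax
        · subst hi2
          simp only [hupd, Function.update_of_ne hi1, Function.update_self]
          rw [max_eq_left (by linarith), max_eq_left (by linarith)]
          simp only [if_true]
          ring
        · simp only [hupd, Function.update_of_ne hi1, Function.update_of_ne hi2,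
            if_neg hi2]
          ring
    have hsumdiff : (∑ i, max (x t i - n / h) 0) - (∑ i, max (x (t + 1) i - n / h) 0)
        = m := by
      rw [← Finset.sum_sub_distrib]
      rw [Finset.sum_congr rfl (fun i _ => key i)]
      simp
    linarith [hsumdiff, hmc]
  refine ⟨step, ?_⟩
  -- E 0 ≤ n
  have hE0 : (∑ i, max (x 0 i - n / h) 0) ≤ n := by
    calc (∑ i, max (x 0 i - n / h) 0) ≤ ∑ i, x 0 i :=
          Finset.sum_le_sum (fun i _ =>
            max_le (by linarith [hnonneg 0 i, hnh]) (hnonneg 0 i))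
      _ = n := hsum0
  have hET : 0 ≤ (∑ i, max (x T i - n / h) 0) :=
    Finset.sum_nonneg (fun i _ => le_max_right _ _)
  -- induction: E t ≤ E 0 - t * c
  have hind : ∀ t ≤ T, (∑ i, max (x t i - n / h) 0)
      ≤ (∑ i, max (x 0 i - n / h) 0) - t * c := by
    intro t
    induction t with
    | zero => intro _; simp
    | succ t ih =>
      intro hlt
      have h1 := ih (le_of_lt (Nat.lt_of_succ_le hlt))
      have h2 := step t (Nat.lt_of_succ_le hlt)
      push_cast
      nlinarith
  have hTc : (T : ℝ) * c ≤ n := by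
    have := hind T le_rfl
    linarith
  rw [hc, ← mul_div_assoc, div_le_iff₀ hden] at hTc
  rw [le_div_iff₀ hε]
  nlinarith
end

section
/- Let a_1 ≤ a_2 ≤ ... ≤ a_h be reals (the red-point fractions of h clusters, sorted), and partition indices into k contiguous chunks of size h/k each (assume k divides h). For i ∈ [h/k], form fold F_i by taking the i-th index from each chunk, i.e., F_i = { a_{(j−1)·h/k + i} : j ∈ [k] }. Then for all i, i′ ∈ [h/k], |avg(F_i) − avg(F_{i′})| ≤ (1/k)·Σ_{j=1}^{k}(a_{j·h/k} − a_{(j−1)·h/k + 1}) ≤ (a_h − a_1)/k. -/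
/-- With a sorted list a_0 ≤ ... ≤ a_{h−1} (h = k·m) split into
k contiguous chunks of size m, form fold F_i from the i-th entry of each
chunk.  Then any two fold averages differ by at most
(1/k)·Σ_j (a_{jm+m−1} − a_{jm}) ≤ (a_{h−1} − a_0)/k. -/
theorem fold_average_spread (h k m : ℕ) (hk : 0 < k) (hm : 0 < m)
    (hhm : h = k * m) (a : ℕ → ℝ)
    (hmono : ∀ i j, i ≤ j → j < h → a i ≤ a j)
    (i i' : ℕ) (hi : i < m) (hi' : i' < m) :
    |(∑ j ∈ Finset.range k, a (j * m + i)) / k -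
        (∑ j ∈ Finset.range k, a (j * m + i')) / k|
      ≤ (1 / k) * ∑ j ∈ Finset.range k, (a (j * m + (m - 1)) - a (j * m)) ∧
    (1 / k) * ∑ j ∈ Finset.range k, (a (j * m + (m - 1)) - a (j * m))
      ≤ (a (h - 1) - a 0) / k := by
  have hk' : (0:ℝ) < k := by exact_mod_cast hk
  have hlt : ∀ j, j < k → ∀ t, t < m → j * m + t < h := by
    intro j hj t ht
    have : j * m + t < j * m + m := by omega
    have h2 : j * m + m ≤ k * m := by
      have : j + 1 ≤ k := hj
      calc j * m + m = (j + 1) * m := by ring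
        _ ≤ k * m := Nat.mul_le_mul_right m this
    omega
  have hbound : ∀ j ∈ Finset.range k,
      |a (j * m + i) - a (j * m + i')| ≤ a (j * m + (m - 1)) - a (j * m) := by
    intro j hj
    rw [Finset.mem_range] at hj
    have h1 : a (j * m + i) ≤ a (j * m + (m - 1)) :=
      hmono _ _ (by omega) (hlt j hj _ (by omega))
    have h2 : a (j * m + i') ≤ a (j * m + (m - 1)) :=
      hmono _ _ (by omega) (hlt j hj _ (by omega))
    have h3 : a (j * m) ≤ a (j * m + i) :=
      hmono _ _ (by omega) (hlt j hj _ hi)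
    have h4 : a (j * m) ≤ a (j * m + i') :=
      hmono _ _ (by omega) (hlt j hj _ hi')
    rw [abs_sub_le_iff]
    constructor <;> linarith
  constructor
  · rw [div_sub_div_same, abs_div, abs_of_pos hk', one_div, inv_mul_eq_div]
    apply div_le_div_of_nonneg_right ?_ hk'.le
    calc |∑ j ∈ Finset.range k, a (j * m + i) - ∑ j ∈ Finset.range k, a (j * m + i')|
        = |∑ j ∈ Finset.range k, (a (j * m + i) - a (j * m + i'))| := by
          rw [Finset.sum_sub_distrib]
      _ ≤ ∑ j ∈ Finset.range k, |a (j * m + i) - a (j * m + i')| :=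
          Finset.abs_sum_le_sum_abs _ _
      _ ≤ _ := Finset.sum_le_sum hbound
  · rw [one_div, inv_mul_eq_div]
    apply div_le_div_of_nonneg_right ?_ hk'.le
    set g : ℕ → ℝ := fun j => a (min (j * m) (h - 1)) with hg
    have key : ∀ j ∈ Finset.range k,
        a (j * m + (m - 1)) - a (j * m) ≤ g (j + 1) - g j := by
      intro j hj
      rw [Finset.mem_range] at hj
      have hjm : j * m ≤ h - 1 := by
        have := hlt j hj 0 hm
        omega
      have hjm1 : (j + 1) * m ≤ h := by
        have : j + 1 ≤ k := hj
        calc (j + 1) * m ≤ k * m := Nat.mul_le_mul_right m this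
          _ = h := hhm.symm
      have hexp : (j + 1) * m = j * m + m := by ring
      have hh : 0 < h := hhm ▸ Nat.mul_pos hk hm
      have h1 : a (j * m + (m - 1)) ≤ g (j + 1) := by
        apply hmono _ _ ?_ ?_ <;> omega
      have h2 : g j = a (j * m) := by
        simp only [hg, Nat.min_eq_left hjm]
      linarith
    calc ∑ j ∈ Finset.range k, (a (j * m + (m - 1)) - a (j * m))
        ≤ ∑ j ∈ Finset.range k, (g (j + 1) - g j) := Finset.sum_le_sum key
      _ = g k - g 0 := Finset.sum_range_sub g k
      _ = a (h - 1) - a 0 := by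
          simp only [hg, Nat.zero_mul, Nat.min_eq_left (Nat.zero_le _)]
          have : min (k * m) (h - 1) = h - 1 := by omega
          rw [this]
end

section
/- Let n points be colored red and blue, with r red points, and suppose the n points are split into h clusters C_1, ..., C_h, each of size between (1−ε)n/h and (1+ε)n/h, sorted so that the red fraction ρ_j = red(C_j)/|C_j| is nondecreasing. If these are folded k-wise by selecting one cluster from each of the k contiguous chunks of h/k sorted clusters, then every folded cluster F satisfies red(F)/|F| ≥ ((1−ε)/((1+ε)k)) · Σ_{j=2}^{k} min_{C ∈ chunk j} ρ(C). -/
/-- n points are split into h = k·m clusters with sizes s i in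
[(1−ε)n/h, (1+ε)n/h] and red counts r i, sorted so that the red fraction
ρ i = r i / s i is nondecreasing.  A k-wise fold F selects one cluster σ j
from each of the k contiguous chunks of m sorted clusters.  Then
red(F)/|F| ≥ ((1−ε)/((1+ε)k)) · Σ_{j=2}^{k} (min red fraction in chunk j),
where by sortedness the minimum of chunk j (1-indexed j ≥ 2) is the red
fraction of its first cluster. -/
theorem fold_fairness_lower_bound (n ε : ℝ) (hn : 0 < n) (hε₁ : 0 < ε)
    (hε₂ : ε < 1) (k m h : ℕ) (hk : 0 < k) (hm : 0 < m) (hh : h = k * m)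
    (r s : ℕ → ℝ) (hr : ∀ i < h, 0 ≤ r i)
    (hs : ∀ i < h, (1 - ε) * n / h ≤ s i ∧ s i ≤ (1 + ε) * n / h)
    (hmono : ∀ i j, i ≤ j → j < h → r i / s i ≤ r j / s j)
    (σ : ℕ → ℕ) (hσ : ∀ j < k, j * m ≤ σ j ∧ σ j < (j + 1) * m) :
    ((1 - ε) / ((1 + ε) * k)) *
        ∑ j ∈ Finset.range (k - 1), r ((j + 1) * m) / s ((j + 1) * m)
      ≤ (∑ j ∈ Finset.range k, r (σ j)) / (∑ j ∈ Finset.range k, s (σ j)) := by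
  have h1ε : (0:ℝ) < 1 - ε := by linarith
  have h2ε : (0:ℝ) < 1 + ε := by linarith
  have hh0 : 0 < h := hh ▸ Nat.mul_pos hk hm
  have hhR : (0:ℝ) < h := Nat.cast_pos.mpr hh0
  have hkR : (0:ℝ) < k := Nat.cast_pos.mpr hk
  set A := (1 - ε) * n / h with hAdef
  set B := (1 + ε) * n / h with hBdef
  have hA : 0 < A := div_pos (mul_pos h1ε hn) hhR
  have spos : ∀ i < h, 0 < s i := fun i hi => lt_of_lt_of_le hA (hs i hi).1
  have hσh : ∀ j < k, σ j < h := by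
    intro j hj
    have := (hσ j hj).2
    have : σ j < (j + 1) * m := this
    have hle : (j + 1) * m ≤ k * m := Nat.mul_le_mul_right m hj
    omega
  have hD : 0 < ∑ j ∈ Finset.range k, s (σ j) := by
    apply Finset.sum_pos
    · intro j hj
      exact spos _ (hσh j (Finset.mem_range.mp hj))
    · exact ⟨0, Finset.mem_range.mpr hk⟩
  have hDle : (∑ j ∈ Finset.range k, s (σ j)) ≤ k * B := by
    calc (∑ j ∈ Finset.range k, s (σ j)) ≤ ∑ j ∈ Finset.range k, B := by
          apply Finset.sum_le_sum
          intro j hj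
          exact (hs _ (hσh j (Finset.mem_range.mp hj))).2
      _ = k * B := by rw [Finset.sum_const, Finset.card_range, nsmul_eq_mul]
  set S := ∑ j ∈ Finset.range (k - 1), r ((j + 1) * m) / s ((j + 1) * m) with hSdef
  have hidx : ∀ j, j + 1 < k → (j + 1) * m < h := by
    intro j hj
    have : (j + 1) * m < k * m := (Nat.mul_lt_mul_right hm).mpr hj
    omega
  have hS0 : 0 ≤ S := by
    apply Finset.sum_nonneg
    intro j hj
    have hjk : j + 1 < k := by
      have := Finset.mem_range.mp hj; omega
    have hlt := hidx j hjk
    exact div_nonneg (hr _ hlt) (spos _ hlt).le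
  have key : ∀ j ∈ Finset.range (k - 1),
      A * (r ((j + 1) * m) / s ((j + 1) * m)) ≤ r (σ (j + 1)) := by
    intro j hj
    have hjk : j + 1 < k := by
      have := Finset.mem_range.mp hj; omega
    have h1 : (j + 1) * m ≤ σ (j + 1) := (hσ _ hjk).1
    have h2 : σ (j + 1) < h := hσh _ hjk
    have h3 : (j + 1) * m < h := hidx j hjk
    have hρ : r ((j + 1) * m) / s ((j + 1) * m) ≤ r (σ (j + 1)) / s (σ (j + 1)) :=
      hmono _ _ h1 h2
    have hρ0 : 0 ≤ r ((j + 1) * m) / s ((j + 1) * m) :=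
      div_nonneg (hr _ h3) (spos _ h3).le
    have hsσ : A ≤ s (σ (j + 1)) := (hs _ h2).1
    have hsσ0 : 0 < s (σ (j + 1)) := spos _ h2
    calc A * (r ((j + 1) * m) / s ((j + 1) * m))
        ≤ s (σ (j + 1)) * (r ((j + 1) * m) / s ((j + 1) * m)) :=
          mul_le_mul_of_nonneg_right hsσ hρ0
      _ ≤ s (σ (j + 1)) * (r (σ (j + 1)) / s (σ (j + 1))) :=
          mul_le_mul_of_nonneg_left hρ hsσ0.le
      _ = r (σ (j + 1)) := by field_simp
  have hR : A * S ≤ ∑ j ∈ Finset.range k, r (σ j) := by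
    obtain ⟨k', rfl⟩ : ∃ k', k = k' + 1 := ⟨k - 1, by omega⟩
    rw [Finset.sum_range_succ']
    have hσ0 : 0 ≤ r (σ 0) := hr _ (hσh 0 (by omega))
    have : A * S ≤ ∑ j ∈ Finset.range k', r (σ (j + 1)) := by
      rw [hSdef, Finset.mul_sum]
      simp only [Nat.add_sub_cancel]
      exact Finset.sum_le_sum key
    linarith
  rw [le_div_iff₀ hD]
  have hc0 : 0 ≤ (1 - ε) / ((1 + ε) * k) := by positivity
  calc ((1 - ε) / ((1 + ε) * k)) * S * (∑ j ∈ Finset.range k, s (σ j))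
      ≤ ((1 - ε) / ((1 + ε) * k)) * S * (k * B) :=
        mul_le_mul_of_nonneg_left hDle (mul_nonneg hc0 hS0)
    _ = A * S := by
        rw [hBdef, hAdef]
        field_simp
    _ ≤ ∑ j ∈ Finset.range k, r (σ j) := hR
end
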